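/- Let A and B be admissible linear chains with e(B) = 1 − e(Aᵀ). Then e(Bᵀ) = 1 − e(A). (That is, the adjoint operation commutes with reversal: (A*)ᵀ = (Aᵀ)*.) -/

import Mathlib

/-!
Both fractions `e(B) = d(B̅)/d(B)` and `1 - e(Aᵀ) = (d(A) - d(A̲))/d(A)` are in lowest terms, since
the continuant identity `d(A̅) d(A̲) - d(A) d(A̲̅) = 1` makes `d(A̅)` and `d(A̲)` inverse to each other
modulo `d(A)`. Hence `d(B) = d(A)` and `d(B̅) = d(A) - d(A̲)`. Reading the identity for `B` modulo
`d(A)` then gives `d(B̲) ≡ -d(A̅)`, and since `d(B̲)` and `d(A) - d(A̅)` both lie strictly between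
`0` and `d(A)`, they are equal: `e(Bᵀ) = 1 - e(A)`.
-/

/-- The tridiagonal matrix associated to a linear chain `A = [a₁,…,a_r]`:
diagonal entries `aᵢ`, entries `-1` immediately above/below the diagonal, `0` elsewhere. -/
def chainMatrix (A : List ℤ) : Matrix (Fin A.length) (Fin A.length) ℤ :=
  fun i j =>
    if i = j then A.get i
    else if (i : ℕ) + 1 = (j : ℕ) ∨ (j : ℕ) + 1 = (i : ℕ) then -1 else 0

/-- The discriminant `d(A)` of a linear chain: the determinant of `chainMatrix A`
(the `0 × 0` determinant being `1` for the empty list). -/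
def disc (A : List ℤ) : ℤ := (chainMatrix A).det

/-- A linear chain is admissible if it is nonempty and all of its entries are `≥ 2`. -/
def Admissible (A : List ℤ) : Prop := A ≠ [] ∧ ∀ a ∈ A, 2 ≤ a

/-- The inductance `e(A) = d(A̅)/d(A)` of a linear chain, as a rational number. -/
def inductance (A : List ℤ) : ℚ := (disc A.tail : ℚ) / (disc A : ℚ)

theorem Matrix.det_eq_of_tridiagonal_row_col_zero {R : Type*} [CommRing R] {n : ℕ}
    (M : Matrix (Fin (n + 2)) (Fin (n + 2)) R)
    (h01 : M 0 1 = -1) (h10 : M 1 0 = -1)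
    (h0 : ∀ j : Fin n, M 0 j.succ.succ = 0) (h0' : ∀ i : Fin n, M i.succ.succ 0 = 0) :
    M.det = M 0 0 * (M.submatrix Fin.succ Fin.succ).det
      - (M.submatrix (Fin.succ ∘ Fin.succ) (Fin.succ ∘ Fin.succ)).det := by
  have h1 : Fin.succAbove (1 : Fin (n + 2)) ∘ Fin.succ = Fin.succ ∘ Fin.succ :=
    funext (Fin.succ_succAbove_succ 0)
  rw [Matrix.det_succ_row_zero, Fin.sum_univ_succ, Fin.sum_univ_succ]
  simp only [h0, mul_zero, zero_mul, Finset.sum_const_zero, add_zero, Fin.succAbove_zero]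
  rw [Matrix.det_succ_column_zero (M.submatrix Fin.succ (Fin.succ 0).succAbove), Fin.sum_univ_succ]
  simp [h01, h10, h0', h1, sub_eq_add_neg]

theorem Int.isCoprime_of_mul_modEq_one {a b n : ℤ} (h : a * b ≡ 1 [ZMOD n]) : IsCoprime a n := by
  obtain ⟨k, hk⟩ := h.dvd
  exact ⟨b, k, by linear_combination -hk⟩

theorem Int.neg_modEq_of_mul_modEq_one {a b c n : ℤ} (hab : a * b ≡ 1 [ZMOD n])
    (hcb : c * b ≡ -1 [ZMOD n]) : c ≡ -a [ZMOD n] :=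
  calc c = c * 1 := (mul_one c).symm
    _ ≡ c * (a * b) [ZMOD n] := hab.symm.mul_left c
    _ = a * (c * b) := by ring
    _ ≡ a * -1 [ZMOD n] := hcb.mul_left a
    _ = -a := mul_neg_one a

theorem chainMatrix_cons_submatrix_succ (a : ℤ) (L : List ℤ) :
    (chainMatrix (a :: L)).submatrix Fin.succ Fin.succ = chainMatrix L := by
  ext i j
  simp [chainMatrix, Fin.succ_inj]

theorem chainMatrix_reverse (A : List ℤ) :
    chainMatrix A.reverse =
      (chainMatrix A).submatrix ((finCongr A.length_reverse).trans Fin.revPerm)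
        ((finCongr A.length_reverse).trans Fin.revPerm) := by
  ext i j
  have hi := i.isLt
  have hj := j.isLt
  simp only [List.length_reverse] at hi hj
  simp only [chainMatrix, Matrix.submatrix_apply, Equiv.trans_apply, finCongr_apply,
    Fin.revPerm_apply, Fin.ext_iff, Fin.val_rev, Fin.val_cast, List.get_eq_getElem,
    List.getElem_reverse]
  split_ifs <;> first | rfl | omega | (congr 1; omega)

theorem disc_nil : disc [] = 1 :=
  Matrix.det_fin_zero

theorem disc_singleton (a : ℤ) : disc [a] = a := by
  simp [disc, chainMatrix]

theorem disc_cons_cons (a b : ℤ) (L : List ℤ) :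
    disc (a :: b :: L) = a * disc (b :: L) - disc L := by
  have h := Matrix.det_eq_of_tridiagonal_row_col_zero (n := L.length) (chainMatrix (a :: b :: L))
    (by simp [chainMatrix]) (by simp [chainMatrix]) (fun j => by simp [chainMatrix, Fin.ext_iff])
    (fun i => by simp [chainMatrix, Fin.ext_iff])
  rw [← Matrix.submatrix_submatrix, chainMatrix_cons_submatrix_succ,
    chainMatrix_cons_submatrix_succ] at h
  simpa [disc, chainMatrix] using h

theorem disc_reverse (A : List ℤ) : disc A.reverse = disc A := by
  rw [disc, chainMatrix_reverse, Matrix.det_submatrix_equiv_self, disc]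

theorem disc_reverse_tail (A : List ℤ) : disc A.reverse.tail = disc A.dropLast := by
  rw [List.tail_reverse, disc_reverse]

theorem inductance_reverse (A : List ℤ) :
    inductance A.reverse = disc A.dropLast / disc A := by
  rw [inductance, disc_reverse_tail, disc_reverse]

-- The continuant identity for the chain `a :: L ++ [b]`; in this shape the induction on `L`
-- (generalising `a`) starts at length two, where the identity begins to hold.
theorem disc_cons_mul_disc_append_sub (a b : ℤ) (L : List ℤ) :
    disc (a :: L) * disc (L ++ [b]) - disc (a :: (L ++ [b])) * disc L = 1 := by
  induction L generalizing a with
  | nil => simp [disc_cons_cons, disc_singleton, disc_nil]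
  | cons c L ih =>
    rw [List.cons_append, disc_cons_cons, disc_cons_cons, ← ih c]
    ring

theorem disc_tail_mul_disc_dropLast_modEq (A : List ℤ) :
    disc A.tail * disc A.dropLast ≡ 1 [ZMOD disc A] := by
  rcases A with _ | ⟨a, L⟩
  · simp [disc_nil]
  rcases L.eq_nil_or_concat with rfl | ⟨L, b, rfl⟩
  · simp [disc_nil]
  have hdrop : (a :: (L ++ [b])).dropLast = a :: L := List.dropLast_concat (l₁ := a :: L)
  rw [Int.modEq_iff_dvd]
  refine ⟨-disc L, ?_⟩
  rw [List.concat_eq_append, List.tail_cons, hdrop]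
  linear_combination -disc_cons_mul_disc_append_sub a b L

theorem Admissible.reverse {A : List ℤ} (hA : Admissible A) : Admissible A.reverse :=
  ⟨List.reverse_ne_nil_iff.mpr hA.1, fun a ha => hA.2 a (List.mem_reverse.mp ha)⟩

theorem Admissible.disc_tail_mem_Ioo {A : List ℤ} (hA : Admissible A) :
    disc A.tail ∈ Set.Ioo 0 (disc A) := by
  obtain ⟨hne, h2⟩ := hA
  induction A with
  | nil => exact absurd rfl hne
  | cons a L ih =>
    have ha : 2 ≤ a := h2 a List.mem_cons_self
    cases L with
    | nil => simp only [List.tail_cons, disc_nil, disc_singleton, Set.mem_Ioo]; omega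
    | cons b L =>
      obtain ⟨hL0, hL⟩ := ih (List.cons_ne_nil b L) fun x hx => h2 x (List.mem_cons_of_mem a hx)
      rw [List.tail_cons] at hL0 hL ⊢
      rw [disc_cons_cons]
      constructor <;> nlinarith

theorem Admissible.disc_dropLast_mem_Ioo {A : List ℤ} (hA : Admissible A) :
    disc A.dropLast ∈ Set.Ioo 0 (disc A) := by
  simpa only [disc_reverse_tail, disc_reverse] using hA.reverse.disc_tail_mem_Ioo

theorem Admissible.disc_pos {A : List ℤ} (hA : Admissible A) : 0 < disc A :=
  hA.disc_tail_mem_Ioo.1.trans hA.disc_tail_mem_Ioo.2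

theorem disc_eq_of_inductance_eq_one_sub_inductance_reverse {A B : List ℤ} (hA : Admissible A)
    (hB : Admissible B) (hAB : inductance B = 1 - inductance A.reverse) :
    disc B = disc A ∧ disc B.tail = disc A - disc A.dropLast := by
  have hA0 : (disc A : ℚ) ≠ 0 := by exact_mod_cast hA.disc_pos.ne'
  have hfrac : (disc B.tail : ℚ) / disc B = ((disc A - disc A.dropLast : ℤ) : ℚ) / disc A := by
    rw [← inductance, hAB, inductance_reverse]
    push_cast
    field_simp
  have hcopA : IsCoprime (disc A - disc A.dropLast) (disc A) := by
    have h : IsCoprime (disc A.dropLast) (disc A) :=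
      Int.isCoprime_of_mul_modEq_one (by rw [mul_comm]; exact disc_tail_mul_disc_dropLast_modEq A)
    simpa [sub_eq_neg_add] using h.neg_left.add_mul_left_left 1
  have hcopB := Int.isCoprime_of_mul_modEq_one (disc_tail_mul_disc_dropLast_modEq B)
  obtain ⟨htail, hdisc⟩ := Rat.div_int_inj hB.disc_pos hA.disc_pos
    (Int.isCoprime_iff_nat_coprime.mp hcopB) (Int.isCoprime_iff_nat_coprime.mp hcopA) hfrac
  exact ⟨hdisc, htail⟩

theorem disc_dropLast_eq_of_disc_eq {A B : List ℤ} (hA : Admissible A) (hB : Admissible B)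
    (hdisc : disc B = disc A) (htail : disc B.tail = disc A - disc A.dropLast) :
    disc B.dropLast = disc A - disc A.tail := by
  have hB' : disc B.tail * disc B.dropLast ≡ 1 [ZMOD disc A] :=
    hdisc ▸ disc_tail_mul_disc_dropLast_modEq B
  have hneg : disc B.dropLast * disc A.dropLast ≡ -1 [ZMOD disc A] := by
    have hA0 : disc A - disc A.dropLast ≡ -disc A.dropLast [ZMOD disc A] :=
      Int.modEq_iff_dvd.mpr ⟨-1, by ring⟩
    have h := ((hA0.mul_right (disc B.dropLast)).symm.trans (htail ▸ hB')).neg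
    convert h using 1
    ring
  have hmod : disc B.dropLast ≡ disc A - disc A.tail [ZMOD disc A] :=
    (Int.neg_modEq_of_mul_modEq_one (disc_tail_mul_disc_dropLast_modEq A) hneg).trans
      (Int.modEq_iff_dvd.mpr ⟨1, by ring⟩)
  obtain ⟨hq0, hq⟩ := hA.disc_tail_mem_Ioo
  obtain ⟨hQ0, hQ⟩ := hB.disc_dropLast_mem_Ioo
  rwa [Int.ModEq, Int.emod_eq_of_lt hQ0.le (hdisc ▸ hQ), Int.emod_eq_of_lt (by omega) (by omega)]
    at hmod

/-- Lemma 2.2 (ii), `(A*)ᵀ = (Aᵀ)*`: if `B = A*` (i.e. `e(B) = 1 − e(Aᵀ)`),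
then `Bᵀ = (Aᵀ)*` (i.e. `e(Bᵀ) = 1 − e(A)`). -/
theorem adjoint_reverse (A B : List ℤ) (hA : Admissible A) (hB : Admissible B)
    (hAB : inductance B = 1 - inductance A.reverse) :
    inductance B.reverse = 1 - inductance A := by
  obtain ⟨hdisc, htail⟩ := disc_eq_of_inductance_eq_one_sub_inductance_reverse hA hB hAB
  have hdrop := disc_dropLast_eq_of_disc_eq hA hB hdisc htail
  have hA0 : (disc A : ℚ) ≠ 0 := by exact_mod_cast hA.disc_pos.ne'
  rw [inductance_reverse, inductance, hdrop, hdisc]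
  push_cast
  field_simp
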